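/- Let n = 8 f_m + 2 with m ≥ 1, s a positive integer, and A : {0,...,n} → ℝ with A_i ≥ 0, A_0 = 1, ∑_i A_i = 2^s, satisfying A_1 = ⟨3n - 4x⟩ and A_2 = (1/2)⟨(4x - 3n + 1)² - 3n - 1⟩. Then 2^s > 3n + 2, i.e., s ≥ 2m + 4. -/

import Mathlib

/-!
Put `g x = testPoly n x = (4x - 3n)² - 4 = 16 (x - (3n+2)/4) (x - (3n-2)/4)`. Since `n ≡ 2 (mod 4)`
the two roots are consecutive integers, so `g ≥ 0` at every integer and
`⟨g⟩ ≥ 2⁻ˢ (g 0 + g 1 A₁ + g 2 A₂)`. On the other hand `g` is a combination of the polynomials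
defining `A₁`, `A₂` and the constant `1`, so `⟨g⟩ = 2A₁ + 2A₂ + 3n - 4`. If `2ˢ ≤ 3n + 2` then
`g 1, g 2 ≥ 2 · 2ˢ` and `g 0 = (3n+2)(3n-2)`, and the two estimates contradict each other.
Finally `3n + 2 = 8 · 4ᵐ = 2^(2m+3)`.
-/

def f (m : ℕ) : ℕ := (4 ^ m - 1) / 3

open Finset

theorem three_mul_f_add_one (m : ℕ) : 3 * f m + 1 = 4 ^ m := by
  have h : 4 ^ m % 3 = 1 := by simp [Nat.pow_mod]
  have : 1 ≤ 4 ^ m := Nat.one_le_pow _ _ (by norm_num)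
  unfold f
  omega

theorem Int.mul_add_one_nonneg (k : ℤ) : 0 ≤ k * (k + 1) := by
  rcases le_or_gt 0 k with hk | hk <;> nlinarith

def testPoly (n : ℕ) (x : ℝ) : ℝ := (4 * x - 3 * n) ^ 2 - 4

theorem testPoly_nonneg {n : ℕ} (hn : n % 4 = 2) (i : ℕ) : 0 ≤ testPoly n i := by
  obtain ⟨a, ha⟩ : 4 ∣ 3 * n + 2 := by omega
  have ha' : (3 * n + 2 : ℝ) = 4 * a := by exact_mod_cast ha
  have key : testPoly n i = 16 * (((i - a : ℤ) * (i - a + 1) : ℤ) : ℝ) := by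
    unfold testPoly
    push_cast
    linear_combination (-(8 * i : ℝ) + 4 * a + 3 * n - 2) * ha'
  rw [key]
  have := Int.mul_add_one_nonneg (i - a)
  positivity

section Moments

variable {n : ℕ} {N : ℝ} {A : ℕ → ℝ}

theorem sum_testPoly_mul (hN : N ≠ 0)
    (hAsum : ∑ i ∈ range (n + 1), A i = N)
    (hA1 : A 1 = (1 / N) * ∑ i ∈ range (n + 1), (3 * n - 4 * i : ℝ) * A i)
    (hA2 : A 2 = (1 / N) * ∑ i ∈ range (n + 1),
      (1 / 2) * ((4 * i - 3 * n + 1 : ℝ) ^ 2 - 3 * n - 1) * A i) :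
    ∑ i ∈ range (n + 1), testPoly n i * A i = N * (2 * A 1 + 2 * A 2 + (3 * n - 4)) := by
  have decomp : ∀ i ∈ range (n + 1), testPoly n i * A i
      = 2 * ((1 / 2) * ((4 * i - 3 * n + 1 : ℝ) ^ 2 - 3 * n - 1) * A i)
        + 2 * ((3 * n - 4 * i : ℝ) * A i) + (3 * n - 4 : ℝ) * A i := by
    intro i _
    unfold testPoly
    ring
  rw [sum_congr rfl decomp, sum_add_distrib, sum_add_distrib, ← mul_sum, ← mul_sum, ← mul_sum,
    hAsum, hA1, hA2]
  field_simp
  ring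

theorem sum_range_three_testPoly_mul_le (hn : n % 4 = 2) (hA : ∀ i ≤ n, 0 ≤ A i) :
    ∑ i ∈ range 3, testPoly n i * A i ≤ ∑ i ∈ range (n + 1), testPoly n i * A i := by
  refine sum_le_sum_of_subset_of_nonneg (range_subset_range.mpr (by omega)) fun i hi _ => ?_
  exact mul_nonneg (testPoly_nonneg hn i) (hA i (Nat.lt_succ_iff.mp (mem_range.mp hi)))

end Moments

theorem lt_of_testPoly_bound {n : ℕ} {N a₁ a₂ : ℝ} (hn : 5 ≤ n) (ha₁ : 0 ≤ a₁) (ha₂ : 0 ≤ a₂)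
    (h : testPoly n 0 + testPoly n 1 * a₁ + testPoly n 2 * a₂
      ≤ N * (2 * a₁ + 2 * a₂ + (3 * n - 4))) :
    3 * n + 2 < N := by
  have hn' : (5 : ℝ) ≤ n := by exact_mod_cast hn
  unfold testPoly at h
  by_contra! hN
  have h₁ : 0 ≤ a₁ * ((4 * 1 - 3 * n) ^ 2 - 4 - 2 * N) := mul_nonneg ha₁ (by nlinarith)
  have h₂ : 0 ≤ a₂ * ((4 * 2 - 3 * n) ^ 2 - 4 - 2 * N) := mul_nonneg ha₂ (by nlinarith)
  have h₀ : N * (3 * n - 4) ≤ (3 * n + 2) * (3 * n - 4) :=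
    mul_le_mul_of_nonneg_right hN (by linarith)
  nlinarith

theorem lp_bound_8fm_add_two_general (m : ℕ) (hm : 1 ≤ m) (n : ℕ)
    (hn : n = 8 * f m + 2)
    (s : ℕ) (A : ℕ → ℝ)
    (hA0 : A 0 = 1)
    (hApos : ∀ i ≤ n, 0 ≤ A i)
    (hAsum : ∑ i ∈ Finset.range (n + 1), A i = 2 ^ s)
    (hA1 : A 1 = (1 / 2 ^ s) * ∑ i ∈ Finset.range (n + 1), (3 * n - 4 * i : ℝ) * A i)
    (hA2 : A 2 = (1 / 2 ^ s) * ∑ i ∈ Finset.range (n + 1),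
      (1 / 2) * ((4 * i - 3 * n + 1 : ℝ) ^ 2 - 3 * n - 1) * A i) :
    (2 : ℝ) ^ s > 3 * n + 2 ∧ 2 * m + 4 ≤ s := by
  have h4m := three_mul_f_add_one m
  have hpow : 4 ≤ 4 ^ m := Nat.le_self_pow (by omega) 4
  have hn4 : n % 4 = 2 := by omega
  have hsum := sum_range_three_testPoly_mul_le hn4 hApos
  rw [sum_testPoly_mul (by positivity) hAsum hA1 hA2] at hsum
  simp only [sum_range_succ, sum_range_zero, hA0, zero_add, mul_one, Nat.cast_ofNat,
    Nat.cast_zero, Nat.cast_one] at hsum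
  have hlt : (2 : ℝ) ^ s > 3 * n + 2 :=
    lt_of_testPoly_bound (by omega) (hApos 1 (by omega)) (hApos 2 (by omega)) hsum
  refine ⟨hlt, ?_⟩
  have h3n : (3 * n + 2 : ℝ) = 2 ^ (2 * m + 3) := by
    rw [pow_add, pow_mul]
    exact_mod_cast (by omega : 3 * n + 2 = 4 ^ m * 8)
  rw [h3n, gt_iff_lt, pow_lt_pow_iff_right₀ (by norm_num)] at hlt
  omega

theorem lp_bound_8fm_add_two (m : ℕ) (hm : 1 ≤ m) (n : ℕ)
    (hn : n = 8 * f m + 2)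
    (s : ℕ) (hs : 1 ≤ s) (A : ℕ → ℝ)
    (hA0 : A 0 = 1)
    (hApos : ∀ i ≤ n, 0 ≤ A i)
    (hAsum : ∑ i ∈ Finset.range (n + 1), A i = 2 ^ s)
    (hA1 : A 1 = (1 / 2 ^ s) * ∑ i ∈ Finset.range (n + 1), (3 * n - 4 * i : ℝ) * A i)
    (hA2 : A 2 = (1 / 2 ^ s) * ∑ i ∈ Finset.range (n + 1),
      (1 / 2) * ((4 * i - 3 * n + 1 : ℝ) ^ 2 - 3 * n - 1) * A i) :
    (2 : ℝ) ^ s > 3 * n + 2 ∧ 2 * m + 4 ≤ s :=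
  lp_bound_8fm_add_two_general m hm n hn s A hA0 hApos hAsum hA1 hA2
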